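/- With the setup below, for every p ≤ θ ≤ q ∈ T and every bounded Borel f : [0,∞) → [0,∞) with compact support, u_{p,θ}(s, u_{θ,q}(·,f)) = u_{p,q}(s,f) for all s ≥ 0. -/

import Mathlib

/-!
The function `w = u_q(·,f)` also solves the `θ`-equation with source `g = u_{θ,q}(·,f)`:
adding `∫_s^∞ φ_θ(w)` to both sides of the `q`-equation for `w` gives
`w(s) + ∫_s^∞ φ_θ(w) = ∫_s^∞ (f + φ_θ(w) - φ_q(w)) = ∫_s^∞ g`.
Since `φ_q ≤ φ_θ` on `[0,∞)`, the source `g` is nonnegative, hence admissible, so uniqueness gives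
`u_θ(·,g) = w`, and the identity becomes `f + φ_θ(w) - φ_q(w) + φ_p(w) - φ_θ(w) = f + φ_p(w) - φ_q(w)`.
-/

open MeasureTheory

/-- A bounded nonnegative Borel function on `[0,∞)` with compact support
(vanishing for all sufficiently large arguments). -/
def CSB (g : ℝ → ℝ) : Prop :=
  Measurable g ∧ (∀ s, 0 ≤ g s) ∧ (∃ C : ℝ, ∀ s, g s ≤ C) ∧
    ∃ S : ℝ, ∀ s, S ≤ s → g s = 0

/-- `w` is a solution of `w(s) + ∫_s^∞ φ_q(w(t)) dt = ∫_s^∞ g(t) dt` in the class of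
bounded nonnegative Borel functions vanishing for large arguments. -/
def IsSol (φq : ℝ → ℝ) (g w : ℝ → ℝ) : Prop :=
  CSB w ∧ ∀ s : ℝ, 0 ≤ s →
    w s + (∫ t in Set.Ioi s, φq (w t)) = ∫ t in Set.Ioi s, g t

/-- `u_{p,q}(s,g) = g(s) + φ_p(u_q(s,g)) - φ_q(u_q(s,g))`. -/
noncomputable def upq (φ : ℝ → ℝ → ℝ) (u : ℝ → (ℝ → ℝ) → ℝ → ℝ)
    (p q : ℝ) (g : ℝ → ℝ) (s : ℝ) : ℝ :=
  g s + φ p (u q g s) - φ q (u q g s)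

lemma integrableOn_Ioi_of_norm_le_of_eq_zero {E : Type*} [NormedAddCommGroup E]
    {g : ℝ → E} (hm : AEStronglyMeasurable g) {M S : ℝ} (hM : ∀ t, ‖g t‖ ≤ M)
    (hS : ∀ t, S ≤ t → g t = 0) (s : ℝ) : IntegrableOn g (Set.Ioi s) := by
  have hIoc : IntegrableOn g (Set.Ioc s S) :=
    Measure.integrableOn_of_bounded measure_Ioc_lt_top.ne hm (M := M) (ae_of_all _ hM)
  refine hIoc.of_forall_sdiff_eq_zero measurableSet_Ioi fun t ht => hS t ?_
  by_contra! htS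
  exact ht.2 ⟨ht.1, htS.le⟩

namespace CSB

variable {f w : ℝ → ℝ}

lemma exists_abs_comp_le (hw : CSB w) {φ : ℝ → ℝ} (hφ : Continuous φ) :
    ∃ M, ∀ t, |φ (w t)| ≤ M := by
  obtain ⟨-, hw0, ⟨C, hC⟩, -⟩ := hw
  obtain ⟨M, hM⟩ := (isCompact_Icc (a := 0) (b := C)).exists_bound_of_continuousOn hφ.continuousOn
  exact ⟨M, fun t => hM _ ⟨hw0 t, hC t⟩⟩

lemma comp_eq_zero (hw : CSB w) {φ : ℝ → ℝ} (hφ0 : φ 0 = 0) :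
    ∃ S, ∀ t, S ≤ t → φ (w t) = 0 := by
  obtain ⟨-, -, -, S, hS⟩ := hw
  exact ⟨S, fun t ht => by rw [hS t ht, hφ0]⟩

lemma integrableOn_Ioi_comp (hw : CSB w) {φ : ℝ → ℝ} (hφ : Continuous φ) (hφ0 : φ 0 = 0)
    (s : ℝ) : IntegrableOn (fun t => φ (w t)) (Set.Ioi s) := by
  obtain ⟨M, hM⟩ := hw.exists_abs_comp_le hφ
  obtain ⟨S, hS⟩ := hw.comp_eq_zero hφ0
  exact integrableOn_Ioi_of_norm_le_of_eq_zero (hφ.measurable.comp hw.1).aestronglyMeasurable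
    hM hS s

lemma integrableOn_Ioi (hf : CSB f) (s : ℝ) : IntegrableOn f (Set.Ioi s) :=
  hf.integrableOn_Ioi_comp continuous_id rfl s

lemma add_comp_sub_comp (hf : CSB f) (hw : CSB w) {φ₁ φ₂ : ℝ → ℝ}
    (hφ₁ : Continuous φ₁) (hφ₂ : Continuous φ₂) (h0₁ : φ₁ 0 = 0) (h0₂ : φ₂ 0 = 0)
    (hle : ∀ x, 0 ≤ x → φ₂ x ≤ φ₁ x) : CSB fun t => f t + φ₁ (w t) - φ₂ (w t) := by
  obtain ⟨hfm, hf0, ⟨C, hC⟩, Sf, hSf⟩ := hf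
  obtain ⟨M₁, hM₁⟩ := hw.exists_abs_comp_le hφ₁
  obtain ⟨M₂, hM₂⟩ := hw.exists_abs_comp_le hφ₂
  obtain ⟨S₁, hS₁⟩ := hw.comp_eq_zero h0₁
  obtain ⟨S₂, hS₂⟩ := hw.comp_eq_zero h0₂
  refine ⟨(hfm.add (hφ₁.measurable.comp hw.1)).sub (hφ₂.measurable.comp hw.1),
    fun t => ?_, ⟨C + M₁ + M₂, fun t => ?_⟩, ⟨max Sf (max S₁ S₂), fun t ht => ?_⟩⟩
  · linarith [hf0 t, hle (w t) (hw.2.1 t)]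
  · linarith [hC t, (abs_le.mp (hM₁ t)).2, (abs_le.mp (hM₂ t)).1]
  · simp only [max_le_iff] at ht
    show f t + φ₁ (w t) - φ₂ (w t) = 0
    rw [hSf t ht.1, hS₁ t ht.2.1, hS₂ t ht.2.2]
    ring

end CSB

lemma IsSol.add_comp_sub_comp {f w : ℝ → ℝ} {φ₁ φ₂ : ℝ → ℝ} (hw : IsSol φ₂ f w) (hf : CSB f)
    (hφ₁ : Continuous φ₁) (hφ₂ : Continuous φ₂) (h0₁ : φ₁ 0 = 0) (h0₂ : φ₂ 0 = 0) :
    IsSol φ₁ (fun t => f t + φ₁ (w t) - φ₂ (w t)) w := by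
  refine ⟨hw.1, fun s hs => ?_⟩
  have hf' := hf.integrableOn_Ioi s
  have h₁ := hw.1.integrableOn_Ioi_comp hφ₁ h0₁ s
  have h₂ := hw.1.integrableOn_Ioi_comp hφ₂ h0₂ s
  beta_reduce
  rw [integral_sub (f := fun t => f t + φ₁ (w t)) (hf'.add h₁) h₂, integral_add hf' h₁]
  linarith [hw.2 s hs]

theorem stmt10_general (T : Set ℝ)
    (φ : ℝ → ℝ → ℝ)
    (hφcont : ∀ q ∈ T, Continuous (φ q))
    (hφ0 : ∀ q ∈ T, φ q 0 = 0)
    -- `q ↦ φ_q(λ)` is decreasing for each `λ ≥ 0`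
    (hφdec : ∀ lam : ℝ, 0 ≤ lam → ∀ p ∈ T, ∀ q ∈ T, p ≤ q → φ q lam ≤ φ p lam)
    (u : ℝ → (ℝ → ℝ) → ℝ → ℝ)
    -- existence and uniqueness of `u_q(·,g)`
    (hu : ∀ q ∈ T, ∀ g, CSB g → IsSol (φ q) g (u q g))
    (huniq : ∀ q ∈ T, ∀ g, CSB g → ∀ w, IsSol (φ q) g w → ∀ s, 0 ≤ s → w s = u q g s) :
    ∀ p ∈ T, ∀ θ ∈ T, ∀ q ∈ T, p ≤ θ → θ ≤ q → ∀ f, CSB f →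
      ∀ s : ℝ, 0 ≤ s →
        upq φ u p θ (upq φ u θ q f) s = upq φ u p q f s := by
  intro p _ θ hθ q hq _ hθq f hf s hs
  have hw := hu q hq f hf
  have hg : CSB (upq φ u θ q f) :=
    hf.add_comp_sub_comp hw.1 (hφcont θ hθ) (hφcont q hq) (hφ0 θ hθ) (hφ0 q hq)
      fun x hx => hφdec x hx θ hθ q hq hθq
  have hwθ : u q f s = u θ (upq φ u θ q f) s :=
    huniq θ hθ _ hg _ (hw.add_comp_sub_comp hf (hφcont θ hθ) (hφcont q hq) (hφ0 θ hθ)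
      (hφ0 q hq)) s hs
  simp only [upq, ← hwθ]
  ring

theorem stmt10 (T : Set ℝ) (hT : T.OrdConnected)
    (φ : ℝ → ℝ → ℝ)
    (hφcont : ∀ q ∈ T, Continuous (φ q))
    (hφ0 : ∀ q ∈ T, φ q 0 = 0)
    -- `q ↦ φ_q(λ)` is decreasing for each `λ ≥ 0`
    (hφdec : ∀ lam : ℝ, 0 ≤ lam → ∀ p ∈ T, ∀ q ∈ T, p ≤ q → φ q lam ≤ φ p lam)
    (u : ℝ → (ℝ → ℝ) → ℝ → ℝ)
    -- existence and uniqueness of `u_q(·,g)`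
    (hu : ∀ q ∈ T, ∀ g, CSB g → IsSol (φ q) g (u q g))
    (huniq : ∀ q ∈ T, ∀ g, CSB g → ∀ w, IsSol (φ q) g w → ∀ s, 0 ≤ s → w s = u q g s) :
    ∀ p ∈ T, ∀ θ ∈ T, ∀ q ∈ T, p ≤ θ → θ ≤ q → ∀ f, CSB f →
      ∀ s : ℝ, 0 ≤ s →
        upq φ u p θ (upq φ u θ q f) s = upq φ u p q f s :=
  stmt10_general T φ hφcont hφ0 hφdec u hu huniq
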